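/- Let k be an algebraically closed field and q ∈ kˣ not a root of unity, and let A = O_q(k²) be the quantum plane over k. Then the prime two-sided ideals of A are exactly the following, where ⟨S⟩ denotes the two-sided ideal generated by S: the zero ideal ⟨0⟩, ⟨x⟩, ⟨y⟩, the ideals ⟨x−α, y⟩ for α ∈ k, and the ideals ⟨x, y−β⟩ for β ∈ k. (For α = β = 0 the last two families both give the ideal ⟨x, y⟩.) -/

import Mathlib

/-- A subset of a ring is a two-sided ideal. -/
def IsTwoSidedIdealSet {A : Type*} [Ring A] (I : Set A) : Prop :=
  (0 : A) ∈ I ∧ (∀ a ∈ I, ∀ b ∈ I, a + b ∈ I) ∧ (∀ a ∈ I, -a ∈ I) ∧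
    (∀ a ∈ I, ∀ r : A, r * a ∈ I) ∧ (∀ a ∈ I, ∀ r : A, a * r ∈ I)

/-- `MulSubset I J P` expresses that the product ideal `I·J` is contained in `P`. -/
def MulSubset {A : Type*} [Ring A] (I J P : Set A) : Prop :=
  ∀ a ∈ I, ∀ b ∈ J, a * b ∈ P

/-- A two-sided ideal `P` is prime. -/
def IsPrimeIdealSet {A : Type*} [Ring A] (P : Set A) : Prop :=
  IsTwoSidedIdealSet P ∧ P ≠ Set.univ ∧
    ∀ I J : Set A, IsTwoSidedIdealSet I → IsTwoSidedIdealSet J →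
      MulSubset I J P → I ⊆ P ∨ J ⊆ P

/-- The two-sided ideal generated by a subset `S`. -/
def idealGen {A : Type*} [Ring A] (S : Set A) : Set A :=
  ⋂₀ {I : Set A | IsTwoSidedIdealSet I ∧ S ⊆ I}

noncomputable section

/-- The defining relation `x y = q y x` of the quantum plane. -/
inductive QPlaneRel (k : Type u) [Field k] (q : kˣ) :
    FreeAlgebra k (Fin 2) → FreeAlgebra k (Fin 2) → Prop
  | rel : QPlaneRel k q (FreeAlgebra.ι k 0 * FreeAlgebra.ι k 1)
      ((q : k) • (FreeAlgebra.ι k 1 * FreeAlgebra.ι k 0))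

/-- The quantum plane `O_q(k²) = k⟨x,y | xy = qyx⟩`. -/
abbrev QPlane (k : Type u) [Field k] (q : kˣ) := RingQuot (QPlaneRel k q)

/-- The generator `x` of the quantum plane. -/
def qpX (k : Type u) [Field k] (q : kˣ) : QPlane k q :=
  RingQuot.mkAlgHom k (QPlaneRel k q) (FreeAlgebra.ι k 0)

/-- The generator `y` of the quantum plane. -/
def qpY (k : Type u) [Field k] (q : kˣ) : QPlane k q :=
  RingQuot.mkAlgHom k (QPlaneRel k q) (FreeAlgebra.ι k 1)

/-! ### Auxiliary material -/

section IdealSetLemmas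

variable {A : Type*} [Ring A]

theorem tsi_mem_smul {k : Type*} [CommSemiring k] [Algebra k A] {I : Set A}
    (hI : IsTwoSidedIdealSet I) {a : A} (ha : a ∈ I) (c : k) : c • a ∈ I := by
  rw [Algebra.smul_def]
  exact hI.2.2.2.1 a ha _

theorem subset_idealGen {S : Set A} : S ⊆ idealGen S := by
  intro a ha
  intro I hI
  exact hI.2 ha

theorem idealGen_isTwoSided (S : Set A) : IsTwoSidedIdealSet (idealGen S) := by
  refine ⟨?_, ?_, ?_, ?_, ?_⟩
  · intro I hI; exact hI.1.1
  · intro a ha b hb I hI; exact hI.1.2.1 a (ha I hI) b (hb I hI)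
  · intro a ha I hI; exact hI.1.2.2.1 a (ha I hI)
  · intro a ha r I hI; exact hI.1.2.2.2.1 a (ha I hI) r
  · intro a ha r I hI; exact hI.1.2.2.2.2 a (ha I hI) r

theorem idealGen_le {S I : Set A} (hI : IsTwoSidedIdealSet I) (hS : S ⊆ I) :
    idealGen S ⊆ I := fun _ ha => ha I ⟨hI, hS⟩

theorem idealGen_mono {S T : Set A} (h : S ⊆ T) : idealGen S ⊆ idealGen T :=
  idealGen_le (idealGen_isTwoSided T) (h.trans subset_idealGen)

theorem tsi_univ_of_one_mem {I : Set A} (hI : IsTwoSidedIdealSet I) (h1 : (1 : A) ∈ I) :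
    I = Set.univ := by
  ext a; simp only [Set.mem_univ, iff_true]
  simpa using hI.2.2.2.1 1 h1 a

theorem isTwoSidedIdealSet_ker {B : Type*} [Ring B] (f : A →+* B) :
    IsTwoSidedIdealSet {a : A | f a = 0} := by
  refine ⟨?_, ?_, ?_, ?_, ?_⟩
  · simp [Set.mem_setOf_eq]
  · intro a ha b hb; simp only [Set.mem_setOf_eq, map_add] at *
    rw [ha, hb, add_zero]
  · intro a ha; simp only [Set.mem_setOf_eq, map_neg] at *
    rw [ha, neg_zero]
  · intro a ha r; simp only [Set.mem_setOf_eq, map_mul] at *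
    rw [ha, mul_zero]
  · intro a ha r; simp only [Set.mem_setOf_eq, map_mul] at *
    rw [ha, zero_mul]

/-- The kernel (as a set) of a ring hom into a nontrivial ring with no zero divisors
is a prime two-sided ideal. -/
theorem isPrime_ker_set {B : Type*} [Ring B] [Nontrivial B] [NoZeroDivisors B]
    (f : A →+* B) : IsPrimeIdealSet {a : A | f a = 0} := by
  refine ⟨isTwoSidedIdealSet_ker f, ?_, ?_⟩
  · intro h
    have : (1 : A) ∈ {a : A | f a = 0} := h ▸ Set.mem_univ _
    simp at this
  · intro I J _ _ hIJ
    by_contra hc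
    push_neg at hc
    obtain ⟨h1, h2⟩ := hc
    obtain ⟨a, haI, haP⟩ := Set.not_subset.mp h1
    obtain ⟨b, hbJ, hbP⟩ := Set.not_subset.mp h2
    simp only [Set.mem_setOf_eq] at haP hbP
    have := hIJ a haI b hbJ
    simp only [Set.mem_setOf_eq, map_mul] at this
    rcases mul_eq_zero.mp this with h | h
    · exact haP h
    · exact hbP h

theorem tsi_preimage {B : Type*} [CommRing B] (f : A →+* B) (Q : Ideal B) :
    IsTwoSidedIdealSet (⇑f ⁻¹' {p | p ∈ Q}) := by
  refine ⟨?_, ?_, ?_, ?_, ?_⟩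
  · simp only [Set.mem_preimage, Set.mem_setOf_eq, map_zero]
    exact Q.zero_mem
  · intro a ha b hb
    simp only [Set.mem_preimage, Set.mem_setOf_eq, map_add] at *
    exact Q.add_mem ha hb
  · intro a ha
    simp only [Set.mem_preimage, Set.mem_setOf_eq, map_neg] at *
    exact Q.neg_mem ha
  · intro a ha r
    simp only [Set.mem_preimage, Set.mem_setOf_eq, map_mul] at *
    exact Ideal.mul_mem_left _ _ ha
  · intro a ha r
    simp only [Set.mem_preimage, Set.mem_setOf_eq, map_mul] at *
    exact Ideal.mul_mem_right _ _ ha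

end IdealSetLemmas

universe u

namespace QPaux

variable {k : Type u} [Field k] (q : kˣ)

local notation "X" => qpX k q
local notation "Y" => qpY k q
local notation "A" => QPlane k q

/-- The universal property of the quantum plane. -/
def qlift {B : Type*} [Ring B] [Algebra k B] (u v : B) (h : u * v = (q : k) • (v * u)) :
    QPlane k q →ₐ[k] B :=
  RingQuot.liftAlgHom k ⟨FreeAlgebra.lift k ![u, v], by
    rintro _ _ ⟨⟩
    simp [h]⟩

@[simp] theorem qlift_x {B : Type*} [Ring B] [Algebra k B] (u v : B)
    (h : u * v = (q : k) • (v * u)) : qlift q u v h X = u := by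
  simp [qlift, qpX, RingQuot.liftAlgHom_mkAlgHom_apply]

@[simp] theorem qlift_y {B : Type*} [Ring B] [Algebra k B] (u v : B)
    (h : u * v = (q : k) • (v * u)) : qlift q u v h Y = v := by
  simp [qlift, qpY, RingQuot.liftAlgHom_mkAlgHom_apply]

theorem xy_comm : X * Y = (q : k) • (Y * X) := by
  have : RingQuot.mkAlgHom k (QPlaneRel k q) (FreeAlgebra.ι k 0 * FreeAlgebra.ι k 1) =
      RingQuot.mkAlgHom k (QPlaneRel k q) ((q : k) • (FreeAlgebra.ι k 1 * FreeAlgebra.ι k 0)) :=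
    RingQuot.mkAlgHom_rel k QPlaneRel.rel
  simpa [qpX, qpY, map_mul, map_smul] using this

theorem yx_comm : Y * X = ((q⁻¹ : kˣ) : k) • (X * Y) := by
  rw [xy_comm, smul_smul]
  simp

/-- Induction over the quantum plane. -/
theorem qp_induction {p : QPlane k q → Prop}
    (halg : ∀ c : k, p (algebraMap k (QPlane k q) c)) (hx : p X) (hy : p Y)
    (hadd : ∀ a b, p a → p b → p (a + b)) (hmul : ∀ a b, p a → p b → p (a * b)) :
    ∀ a, p a := by
  intro a
  obtain ⟨b, rfl⟩ := RingQuot.mkAlgHom_surjective k (QPlaneRel k q) a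
  induction b using FreeAlgebra.induction with
  | grade0 c => rw [AlgHom.commutes]; exact halg c
  | grade1 i =>
    match i with
    | 0 => exact hx
    | 1 => exact hy
  | mul a b ha hb => rw [map_mul]; exact hmul _ _ ha hb
  | add a b ha hb => rw [map_add]; exact hadd _ _ ha hb

theorem alghom_ext {B : Type*} [Ring B] [Algebra k B] {F G : QPlane k q →ₐ[k] B}
    (hx : F X = G X) (hy : F Y = G Y) : F = G := by
  apply AlgHom.ext
  refine qp_induction q (p := fun a => F a = G a) ?_ ?_ ?_ ?_ ?_
  · intro c; rw [AlgHom.commutes, AlgHom.commutes]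
  · exact hx
  · exact hy
  · intro a b ha hb; rw [map_add, map_add, ha, hb]
  · intro a b ha hb; rw [map_mul, map_mul, ha, hb]

@[simp] theorem qinv_mul : ((q⁻¹ : kˣ) : k) * (q : k) = 1 := by
  rw [← Units.val_mul]; simp

@[simp] theorem mul_qinv : (q : k) * ((q⁻¹ : kˣ) : k) = 1 := by
  rw [← Units.val_mul]; simp

theorem rel_smul (lam mu : k) :
    (lam • X) * (mu • Y) = (q : k) • ((mu • Y) * (lam • X)) := by
  simp only [smul_mul_assoc, mul_smul_comm, smul_smul]
  rw [xy_comm, smul_smul]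
  congr 1; ring

/-- The automorphism moving elements past `x` : `a * x = x * σ a`. -/
def σ : QPlane k q →ₐ[k] QPlane k q :=
  qlift q X (((q⁻¹ : kˣ) : k) • Y) (by simpa using rel_smul q 1 ((q⁻¹ : kˣ) : k))

@[simp] theorem σ_x : σ q X = X := qlift_x _ _ _ _
@[simp] theorem σ_y : σ q Y = ((q⁻¹ : kˣ) : k) • Y := qlift_y _ _ _ _

/-- The automorphism moving elements past `y` : `a * y = y * τ a`. -/
def τ : QPlane k q →ₐ[k] QPlane k q :=
  qlift q ((q : k) • X) Y (by simpa using rel_smul q ((q : k)) 1)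

@[simp] theorem τ_x : τ q X = (q : k) • X := qlift_x _ _ _ _
@[simp] theorem τ_y : τ q Y = Y := qlift_y _ _ _ _

/-- The inverse of `τ`, moving elements past `y` from the left: `y * a = τ' a * y`. -/
def τ' : QPlane k q →ₐ[k] QPlane k q :=
  qlift q (((q⁻¹ : kˣ) : k) • X) Y (by simpa using rel_smul q (((q⁻¹ : kˣ) : k)) 1)

@[simp] theorem τ'_x : τ' q X = ((q⁻¹ : kˣ) : k) • X := qlift_x _ _ _ _
@[simp] theorem τ'_y : τ' q Y = Y := qlift_y _ _ _ _

/-- The inverse of `σ`, moving elements past `x` from the left: `x * a = σ' a * x`. -/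
def σ' : QPlane k q →ₐ[k] QPlane k q :=
  qlift q X ((q : k) • Y) (by simpa using rel_smul q 1 ((q : k)))

@[simp] theorem σ'_x : σ' q X = X := qlift_x _ _ _ _
@[simp] theorem σ'_y : σ' q Y = (q : k) • Y := qlift_y _ _ _ _

theorem mul_x (a : QPlane k q) : a * X = X * σ q a := by
  induction a using qp_induction q with
  | halg c => rw [AlgHom.commutes, Algebra.commutes]
  | hx => rw [σ_x]
  | hy =>
    rw [σ_y, mul_smul_comm, xy_comm, smul_smul, qinv_mul, one_smul]
  | hadd a b ha hb => rw [add_mul, map_add, mul_add, ha, hb]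
  | hmul a b ha hb => rw [map_mul, mul_assoc, hb, ← mul_assoc, ha, mul_assoc]

theorem mul_y (a : QPlane k q) : a * Y = Y * τ q a := by
  induction a using qp_induction q with
  | halg c => rw [AlgHom.commutes, Algebra.commutes]
  | hx => rw [τ_x, mul_smul_comm, xy_comm]
  | hy => rw [τ_y]
  | hadd a b ha hb => rw [add_mul, map_add, mul_add, ha, hb]
  | hmul a b ha hb => rw [map_mul, mul_assoc, hb, ← mul_assoc, ha, mul_assoc]

theorem y_mul (a : QPlane k q) : Y * a = τ' q a * Y := by
  induction a using qp_induction q with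
  | halg c => rw [AlgHom.commutes, Algebra.commutes]
  | hx => rw [τ'_x, smul_mul_assoc, yx_comm]
  | hy => rw [τ'_y]
  | hadd a b ha hb => rw [mul_add, map_add, add_mul, ha, hb]
  | hmul a b ha hb => rw [map_mul, ← mul_assoc, ha, mul_assoc, hb, ← mul_assoc]

theorem x_mul (a : QPlane k q) : X * a = σ' q a * X := by
  induction a using qp_induction q with
  | halg c => rw [AlgHom.commutes, Algebra.commutes]
  | hx => rw [σ'_x]
  | hy => rw [σ'_y, smul_mul_assoc, xy_comm]
  | hadd a b ha hb => rw [mul_add, map_add, add_mul, ha, hb]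
  | hmul a b ha hb => rw [map_mul, ← mul_assoc, ha, mul_assoc, hb, ← mul_assoc]


/-! ### Monomials and the PBW basis -/

/-- The monomial `x^i y^j`. -/
def mono (u : ℕ × ℕ) : QPlane k q := X ^ u.1 * Y ^ u.2

theorem mono_zero : mono q (0 : ℕ × ℕ) = 1 := by simp [mono]

theorem mono_X : mono q (1, 0) = X := by simp [mono]

theorem mono_Y : mono q (0, 1) = Y := by simp [mono]

theorem y_mul_xpow (i : ℕ) :
    Y * X ^ i = (((q⁻¹ : kˣ) : k)) ^ i • (X ^ i * Y) := by
  induction i with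
  | zero => simp
  | succ i ih =>
    rw [pow_succ, ← mul_assoc, ih, smul_mul_assoc, mul_assoc, yx_comm, mul_smul_comm,
      smul_smul, pow_succ, mul_assoc]

theorem ypow_mul_xpow (i j : ℕ) :
    Y ^ j * X ^ i = (((q⁻¹ : kˣ) : k)) ^ (i * j) • (X ^ i * Y ^ j) := by
  induction j with
  | zero => simp
  | succ j ih =>
    rw [pow_succ, mul_assoc, y_mul_xpow, mul_smul_comm, ← mul_assoc, ih, smul_mul_assoc,
      smul_smul, ← pow_add, mul_assoc]
    congr 2
    ring

theorem mono_mul (u v : ℕ × ℕ) :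
    mono q u * mono q v = (((q⁻¹ : kˣ) : k)) ^ (u.2 * v.1) • mono q (u + v) := by
  show X ^ u.1 * Y ^ u.2 * (X ^ v.1 * Y ^ v.2) = _
  rw [mul_assoc, ← mul_assoc (Y ^ u.2), ypow_mul_xpow, smul_mul_assoc, mul_smul_comm,
    mul_assoc, ← mul_assoc (X ^ u.1), ← pow_add, ← pow_add, mul_comm v.1 u.2]
  rfl

theorem y_mul_mono (u : ℕ × ℕ) :
    Y * mono q u = (((q⁻¹ : kˣ) : k)) ^ u.1 • mono q (u.1, u.2 + 1) := by
  have h := mono_mul q (0, 1) u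
  rw [mono_Y] at h
  have h1 : ((0, 1) + u : ℕ × ℕ) = (u.1, u.2 + 1) := by ext <;> simp <;> omega
  rw [h, h1]
  simp

theorem mono_mul_y (u : ℕ × ℕ) : mono q u * Y = mono q (u.1, u.2 + 1) := by
  have h := mono_mul q u (0, 1)
  rw [mono_Y] at h
  have h1 : (u + (0, 1) : ℕ × ℕ) = (u.1, u.2 + 1) := by ext <;> simp <;> omega
  rw [h, h1]
  simp

theorem x_mul_mono (u : ℕ × ℕ) : X * mono q u = mono q (u.1 + 1, u.2) := by
  have h := mono_mul q (1, 0) u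
  rw [mono_X] at h
  have h1 : ((1, 0) + u : ℕ × ℕ) = (u.1 + 1, u.2) := by ext <;> simp <;> omega
  rw [h, h1]
  simp

theorem mono_mul_x (u : ℕ × ℕ) :
    mono q u * X = (((q⁻¹ : kˣ) : k)) ^ u.2 • mono q (u.1 + 1, u.2) := by
  have h := mono_mul q u (1, 0)
  rw [mono_X] at h
  have h1 : (u + (1, 0) : ℕ × ℕ) = (u.1 + 1, u.2) := by ext <;> simp <;> omega
  rw [h, h1]
  simp

/-! ### A representation, giving linear independence of the monomials -/

/-- The representation space. -/
abbrev V (k : Type u) [Field k] : Type u := (ℕ × ℕ) →₀ k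

/-- The operator representing `x`. -/
def Xop : V k →ₗ[k] V k := Finsupp.lmapDomain k k (fun u => (u.1 + 1, u.2))

/-- The operator representing `y`. -/
def Yop : V k →ₗ[k] V k :=
  Finsupp.lsum k fun u => (((q⁻¹ : kˣ) : k)) ^ u.1 • Finsupp.lsingle (u.1, u.2 + 1)

@[simp] theorem Xop_single (u : ℕ × ℕ) (m : k) :
    Xop (Finsupp.single u m) = Finsupp.single (u.1 + 1, u.2) m := by
  simp [Xop, Finsupp.mapDomain_single]

@[simp] theorem Yop_single (u : ℕ × ℕ) (m : k) :
    Yop q (Finsupp.single u m) =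
      (((q⁻¹ : kˣ) : k)) ^ u.1 • Finsupp.single (u.1, u.2 + 1) m := by
  rw [Yop, Finsupp.lsum_single]
  simp

theorem XopYop_rel :
    (Xop : Module.End k (V k)) * Yop q = (q : k) • (Yop q * Xop) := by
  refine Finsupp.lhom_ext fun u m => ?_
  show Xop (Yop q (Finsupp.single u m)) = ((q : k) • ((Yop q) ∘ₗ (Xop : V k →ₗ[k] V k))) (Finsupp.single u m)
  rw [Yop_single, map_smul, Xop_single, LinearMap.smul_apply, LinearMap.comp_apply,
    Xop_single, Yop_single, smul_smul]
  congr 1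
  rw [pow_succ', ← mul_assoc, mul_qinv, one_mul]

/-- The representation of the quantum plane on `V`. -/
def ρ : QPlane k q →ₐ[k] Module.End k (V k) := qlift q Xop (Yop q) (XopYop_rel q)

theorem Yop_pow (j t : ℕ) :
    (Yop q ^ j) (Finsupp.single (0, t) 1) = Finsupp.single (0, t + j) 1 := by
  induction j generalizing t with
  | zero => simp
  | succ j ih =>
    rw [pow_succ', Module.End.mul_apply, ih, Yop_single,
      show (((0, t + j) : ℕ × ℕ).1, ((0, t + j) : ℕ × ℕ).2 + 1) = ((0 : ℕ), t + (j + 1))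
        from by ext <;> simp <;> omega]
    simp

theorem Xop_pow (i t j : ℕ) :
    ((Xop : Module.End k (V k)) ^ i) (Finsupp.single (t, j) 1) = Finsupp.single (t + i, j) 1 := by
  induction i generalizing t with
  | zero => simp
  | succ i ih =>
    rw [pow_succ', Module.End.mul_apply, ih, Xop_single,
      show (((t + i, j) : ℕ × ℕ).1 + 1, ((t + i, j) : ℕ × ℕ).2) = ((t + (i + 1) : ℕ), j)
        from by ext <;> simp <;> omega]

theorem ρ_mono (u : ℕ × ℕ) :
    (ρ q (mono q u)) (Finsupp.single (0, 0) 1) = Finsupp.single u 1 := by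
  rw [mono, map_mul, map_pow, map_pow, ρ, qlift_x, qlift_y, Module.End.mul_apply]
  have h0 : ((0, 0) : ℕ × ℕ) = ((0 : ℕ), (0 : ℕ)) := rfl
  rw [h0, Yop_pow, Xop_pow]
  congr 1
  ext <;> simp

theorem mono_li : LinearIndependent k (mono q) := by
  apply LinearIndependent.of_comp
    ((LinearMap.applyₗ (Finsupp.single ((0, 0) : ℕ × ℕ) (1 : k))).comp (ρ q).toLinearMap)
  have : (((LinearMap.applyₗ (Finsupp.single ((0, 0) : ℕ × ℕ) (1 : k))).comp
      (ρ q).toLinearMap) ∘ (mono q)) = fun u => Finsupp.single u (1 : k) := by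
    funext u
    simpa using ρ_mono q u
  rw [this]
  have := (Finsupp.basisSingleOne (R := k) (ι := ℕ × ℕ)).linearIndependent
  rwa [Finsupp.coe_basisSingleOne] at this

theorem mono_mul_mem_span {a b : QPlane k q}
    (ha : a ∈ Submodule.span k (Set.range (mono q)))
    (hb : b ∈ Submodule.span k (Set.range (mono q))) :
    a * b ∈ Submodule.span k (Set.range (mono q)) := by
  induction ha using Submodule.span_induction with
  | mem a hmem =>
    obtain ⟨u, rfl⟩ := hmem
    induction hb using Submodule.span_induction with
    | mem b hmem' =>
      obtain ⟨v, rfl⟩ := hmem'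
      rw [mono_mul]
      exact Submodule.smul_mem _ _ (Submodule.subset_span ⟨u + v, rfl⟩)
    | zero => rw [mul_zero]; exact Submodule.zero_mem _
    | add x y hx hy ihx ihy => rw [mul_add]; exact Submodule.add_mem _ ihx ihy
    | smul c x hx ihx => rw [mul_smul_comm]; exact Submodule.smul_mem _ _ ihx
  | zero => rw [zero_mul]; exact Submodule.zero_mem _
  | add x y hx hy ihx ihy => rw [add_mul]; exact Submodule.add_mem _ ihx ihy
  | smul c x hx ihx => rw [smul_mul_assoc]; exact Submodule.smul_mem _ _ ihx

theorem mono_span : Submodule.span k (Set.range (mono q)) = ⊤ := by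
  rw [eq_top_iff]
  rintro a -
  refine qp_induction q (p := fun a => a ∈ Submodule.span k (Set.range (mono q)))
    ?_ ?_ ?_ ?_ ?_ a
  · intro c
    rw [Algebra.algebraMap_eq_smul_one, ← mono_zero q]
    exact Submodule.smul_mem _ _ (Submodule.subset_span ⟨0, rfl⟩)
  · rw [← mono_X q]; exact Submodule.subset_span ⟨_, rfl⟩
  · rw [← mono_Y q]; exact Submodule.subset_span ⟨_, rfl⟩
  · intro a b ha hb; exact Submodule.add_mem _ ha hb
  · intro a b ha hb; exact mono_mul_mem_span q ha hb

/-- The PBW basis of the quantum plane. -/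
def B : Module.Basis (ℕ × ℕ) k (QPlane k q) :=
  Module.Basis.mk (mono_li q) (by rw [mono_span])

@[simp] theorem B_apply (u : ℕ × ℕ) : B q u = mono q u := Module.Basis.mk_apply _ _ _

@[simp] theorem B_repr_mono (u : ℕ × ℕ) :
    (B q).repr (mono q u) = Finsupp.single u 1 := by
  rw [← B_apply, Module.Basis.repr_self]

instance : Nontrivial (QPlane k q) := by
  refine nontrivial_of_ne 1 0 fun h => ?_
  have := congrArg ((B q).repr) h
  rw [← mono_zero q, B_repr_mono, map_zero] at this
  simpa using Finsupp.single_eq_zero.mp this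


/-! ### The quantum plane is a domain -/

theorem repr_sum (a : QPlane k q) :
    a = ((B q).repr a).sum fun u c => c • mono q u := by
  conv_lhs => rw [← (B q).linearCombination_repr a]
  rw [Finsupp.linearCombination_apply]
  exact Finsupp.sum_congr fun u _ => by rw [B_apply]

theorem mul_eq (a b : QPlane k q) :
    a * b = ∑ u ∈ ((B q).repr a).support, ∑ v ∈ ((B q).repr b).support,
      (((B q).repr a) u * ((B q).repr b) v * (((q⁻¹ : kˣ) : k)) ^ (u.2 * v.1)) •
        mono q (u + v) := by
  conv_lhs => rw [repr_sum q a, repr_sum q b]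
  rw [Finsupp.sum, Finsupp.sum, Finset.sum_mul]
  refine Finset.sum_congr rfl fun u hu => ?_
  rw [Finset.mul_sum]
  refine Finset.sum_congr rfl fun v hv => ?_
  rw [smul_mul_assoc, mul_smul_comm, smul_smul, mono_mul, smul_smul, mul_assoc]

theorem repr_mul_apply (a b : QPlane k q) (s : ℕ × ℕ) :
    ((B q).repr (a * b)) s = ∑ u ∈ ((B q).repr a).support, ∑ v ∈ ((B q).repr b).support,
      (if u + v = s then
        ((B q).repr a) u * ((B q).repr b) v * (((q⁻¹ : kˣ) : k)) ^ (u.2 * v.1) else 0) := by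
  rw [mul_eq, map_sum, Finsupp.finset_sum_apply]
  refine Finset.sum_congr rfl fun u hu => ?_
  rw [map_sum, Finsupp.finset_sum_apply]
  refine Finset.sum_congr rfl fun v hv => ?_
  rw [map_smul, B_repr_mono, Finsupp.smul_apply, Finsupp.single_apply]
  split <;> simp [smul_eq_mul]

theorem weight_inj {M a b a' b' : ℕ} (hb : b < M) (hb' : b' < M)
    (h : M * a + b = M * a' + b') : a = a' ∧ b = b' := by
  have hM : 0 < M := lt_of_le_of_lt (Nat.zero_le _) hb
  have ha : a = a' := by
    have h1 := congrArg (· / M) h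
    simpa [Nat.mul_add_div hM, Nat.div_eq_of_lt hb, Nat.div_eq_of_lt hb'] using h1
  subst ha
  exact ⟨rfl, by omega⟩

theorem qp_mul_ne_zero {a b : QPlane k q} (ha : a ≠ 0) (hb : b ≠ 0) : a * b ≠ 0 := by
  have hfa : (B q).repr a ≠ 0 := fun h => ha (by simpa using ((B q).repr.map_eq_zero_iff).mp h)
  have hfb : (B q).repr b ≠ 0 := fun h => hb (by simpa using ((B q).repr.map_eq_zero_iff).mp h)
  have hsa : ((B q).repr a).support.Nonempty := Finsupp.support_nonempty_iff.mpr hfa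
  have hsb : ((B q).repr b).support.Nonempty := Finsupp.support_nonempty_iff.mpr hfb
  set sa := ((B q).repr a).support with hsa'
  set sb := ((B q).repr b).support with hsb'
  set Ma := (sa.image Prod.snd).max' (hsa.image _) with hMa
  set Mb := (sb.image Prod.snd).max' (hsb.image _) with hMb
  set M := Ma + Mb + 1 with hM
  set w : ℕ × ℕ → ℕ := fun u => M * u.1 + u.2 with hw
  -- bounds on second coordinates
  have hbda : ∀ u ∈ sa, u.2 < M := fun u hu => by
    have : u.2 ≤ Ma := Finset.le_max' _ _ (Finset.mem_image_of_mem _ hu)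
    omega
  have hbdb : ∀ v ∈ sb, v.2 < M := fun v hv => by
    have : v.2 ≤ Mb := Finset.le_max' _ _ (Finset.mem_image_of_mem _ hv)
    omega
  -- maximizers
  obtain ⟨us, hus, husw⟩ := Finset.mem_image.mp (Finset.max'_mem (sa.image w) ((hsa.image w)))
  obtain ⟨vs, hvs, hvsw⟩ := Finset.mem_image.mp (Finset.max'_mem (sb.image w) ((hsb.image w)))
  have hmaxa : ∀ u ∈ sa, w u ≤ w us := fun u hu => by
    rw [husw]; exact Finset.le_max' _ _ (Finset.mem_image_of_mem _ hu)
  have hmaxb : ∀ v ∈ sb, w v ≤ w vs := fun v hv => by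
    rw [hvsw]; exact Finset.le_max' _ _ (Finset.mem_image_of_mem _ hv)
  -- uniqueness of the top pair
  have huniq : ∀ u ∈ sa, ∀ v ∈ sb, u + v = us + vs → u = us ∧ v = vs := by
    intro u hu v hv huv
    have hwadd : ∀ p r : ℕ × ℕ, w (p + r) = w p + w r := by
      intro p r
      show M * (p + r).1 + (p + r).2 = _
      rw [Prod.fst_add, Prod.snd_add]
      ring
    have h1 : w u + w v = w us + w vs := by
      rw [← hwadd, ← hwadd, huv]
    have h2 : w u = w us := by
      have := hmaxa u hu
      have := hmaxb v hv
      omega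
    obtain ⟨e1, e2⟩ := weight_inj (hbda u hu) (hbda us hus) h2
    have hueq : u = us := Prod.ext e1 e2
    subst hueq
    exact ⟨rfl, by
      have : v = vs := by
        have := add_left_cancel huv
        exact this
      exact this⟩
  -- the top coefficient of a * b is nonzero
  intro hab
  have h0 := repr_mul_apply q a b (us + vs)
  rw [hab, map_zero, Finsupp.coe_zero, Pi.zero_apply] at h0
  rw [Finset.sum_eq_single_of_mem us hus (fun u hu hne => Finset.sum_eq_zero fun v hv => by
    rw [if_neg]
    intro hc
    exact hne (huniq u hu v hv hc).1)] at h0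
  rw [Finset.sum_eq_single_of_mem vs hvs (fun v hv hne => by
    rw [if_neg]
    intro hc
    exact hne (huniq us hus v hv hc).2)] at h0
  rw [if_pos rfl] at h0
  have hne : ((B q).repr a) us * ((B q).repr b) vs * (((q⁻¹ : kˣ) : k)) ^ (us.2 * vs.1) ≠ 0 := by
    refine mul_ne_zero (mul_ne_zero ?_ ?_) (pow_ne_zero _ (Units.ne_zero _))
    · exact Finsupp.mem_support_iff.mp hus
    · exact Finsupp.mem_support_iff.mp hvs
  exact hne h0.symm


/-! ### Algebra maps out of the quantum plane, and kernel computations -/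

/-- The map `x ↦ X`, `y ↦ 0` to the polynomial ring. -/
def killY : QPlane k q →ₐ[k] Polynomial k := qlift q Polynomial.X 0 (by simp)

@[simp] theorem killY_x : killY q X = Polynomial.X := qlift_x _ _ _ _
@[simp] theorem killY_y : killY q Y = 0 := qlift_y _ _ _ _

/-- The map `x ↦ 0`, `y ↦ X` to the polynomial ring. -/
def killX : QPlane k q →ₐ[k] Polynomial k := qlift q 0 Polynomial.X (by simp)

@[simp] theorem killX_x : killX q X = 0 := qlift_x _ _ _ _
@[simp] theorem killX_y : killX q Y = Polynomial.X := qlift_y _ _ _ _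

/-- Evaluation at `(α, 0)`. -/
def evA (α : k) : QPlane k q →ₐ[k] k := qlift q α 0 (by simp)

@[simp] theorem evA_x (α : k) : evA q α X = α := qlift_x _ _ _ _
@[simp] theorem evA_y (α : k) : evA q α Y = 0 := qlift_y _ _ _ _

/-- Evaluation at `(0, β)`. -/
def evB (β : k) : QPlane k q →ₐ[k] k := qlift q 0 β (by simp)

@[simp] theorem evB_x (β : k) : evB q β X = 0 := qlift_x _ _ _ _
@[simp] theorem evB_y (β : k) : evB q β Y = β := qlift_y _ _ _ _

theorem killY_aeval (p : Polynomial k) : killY q (Polynomial.aeval (qpX k q) p) = p := by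
  rw [← Polynomial.aeval_algHom_apply]
  simp [Polynomial.aeval_X_left_apply]

theorem killX_aeval (p : Polynomial k) : killX q (Polynomial.aeval (qpY k q) p) = p := by
  rw [← Polynomial.aeval_algHom_apply]
  simp [Polynomial.aeval_X_left_apply]

/-- The defect of a "projection" endomorphism lies in the corresponding ideal. -/
theorem defect {F : QPlane k q →ₐ[k] QPlane k q} {S : Set (QPlane k q)}
    (hx : X - F X ∈ idealGen S) (hy : Y - F Y ∈ idealGen S) :
    ∀ a, a - F a ∈ idealGen S := by
  have hI := idealGen_isTwoSided S
  refine qp_induction q (p := fun a => a - F a ∈ idealGen S) ?_ hx hy ?_ ?_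
  · intro c
    rw [AlgHom.commutes, sub_self]
    exact hI.1
  · intro a b ha hb
    have h : a + b - F (a + b) = (a - F a) + (b - F b) := by rw [map_add]; abel
    rw [h]
    exact hI.2.1 _ ha _ hb
  · intro a b ha hb
    have h : a * b - F (a * b) = a * (b - F b) + (a - F a) * F b := by rw [map_mul, mul_sub, sub_mul]; abel
    rw [h]
    exact hI.2.1 _ (hI.2.2.2.1 _ hb a) _ (hI.2.2.2.2 _ ha (F b))

theorem defect_killY (a : QPlane k q) :
    a - Polynomial.aeval (qpX k q) (killY q a) ∈ idealGen {qpY k q} := by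
  refine defect q (F := (Polynomial.aeval (qpX k q)).comp (killY q)) ?_ ?_ a
  · simp only [AlgHom.comp_apply, killY_x, Polynomial.aeval_X, sub_self]
    exact (idealGen_isTwoSided _).1
  · simp only [AlgHom.comp_apply, killY_y, map_zero, sub_zero]
    exact subset_idealGen rfl

theorem defect_killX (a : QPlane k q) :
    a - Polynomial.aeval (qpY k q) (killX q a) ∈ idealGen {qpX k q} := by
  refine defect q (F := (Polynomial.aeval (qpY k q)).comp (killX q)) ?_ ?_ a
  · simp only [AlgHom.comp_apply, killX_x, map_zero, sub_zero]
    exact subset_idealGen rfl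
  · simp only [AlgHom.comp_apply, killX_y, Polynomial.aeval_X, sub_self]
    exact (idealGen_isTwoSided _).1

theorem defect_evA (α : k) (a : QPlane k q) :
    a - algebraMap k (QPlane k q) (evA q α a) ∈
      idealGen {qpX k q - algebraMap k (QPlane k q) α, qpY k q} := by
  refine defect q (F := (Algebra.ofId k (QPlane k q)).comp (evA q α)) ?_ ?_ a
  · show X - algebraMap k (QPlane k q) (evA q α X) ∈ _
    rw [evA_x]
    exact subset_idealGen (Or.inl rfl)
  · show Y - algebraMap k (QPlane k q) (evA q α Y) ∈ _
    rw [evA_y, map_zero, sub_zero]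
    exact subset_idealGen (Or.inr rfl)

theorem defect_evB (β : k) (a : QPlane k q) :
    a - algebraMap k (QPlane k q) (evB q β a) ∈
      idealGen {qpX k q, qpY k q - algebraMap k (QPlane k q) β} := by
  refine defect q (F := (Algebra.ofId k (QPlane k q)).comp (evB q β)) ?_ ?_ a
  · show X - algebraMap k (QPlane k q) (evB q β X) ∈ _
    rw [evB_x, map_zero, sub_zero]
    exact subset_idealGen (Or.inl rfl)
  · show Y - algebraMap k (QPlane k q) (evB q β Y) ∈ _
    rw [evB_y]
    exact subset_idealGen (Or.inr rfl)

theorem idealGen_Y_eq : idealGen {qpY k q} = {a : QPlane k q | killY q a = 0} := by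
  apply Set.Subset.antisymm
  · exact idealGen_le (isTwoSidedIdealSet_ker (killY q : QPlane k q →+* Polynomial k))
      (by rintro a rfl; simp [Set.mem_setOf_eq])
  · intro a (ha : killY q a = 0)
    have h := defect_killY q a
    rwa [ha, map_zero, sub_zero] at h

theorem idealGen_X_eq : idealGen {qpX k q} = {a : QPlane k q | killX q a = 0} := by
  apply Set.Subset.antisymm
  · exact idealGen_le (isTwoSidedIdealSet_ker (killX q : QPlane k q →+* Polynomial k))
      (by rintro a rfl; simp [Set.mem_setOf_eq])
  · intro a (ha : killX q a = 0)
    have h := defect_killX q a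
    rwa [ha, map_zero, sub_zero] at h

theorem idealGen_ptA_eq (α : k) :
    idealGen {qpX k q - algebraMap k (QPlane k q) α, qpY k q} =
      {a : QPlane k q | evA q α a = 0} := by
  apply Set.Subset.antisymm
  · refine idealGen_le (isTwoSidedIdealSet_ker (evA q α : QPlane k q →+* k)) ?_
    rintro a (rfl | rfl) <;> simp [Set.mem_setOf_eq]
  · intro a (ha : evA q α a = 0)
    have h := defect_evA q α a
    rwa [ha, map_zero, sub_zero] at h

theorem idealGen_ptB_eq (β : k) :
    idealGen {qpX k q, qpY k q - algebraMap k (QPlane k q) β} =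
      {a : QPlane k q | evB q β a = 0} := by
  apply Set.Subset.antisymm
  · refine idealGen_le (isTwoSidedIdealSet_ker (evB q β : QPlane k q →+* k)) ?_
    rintro a (rfl | rfl) <;> simp [Set.mem_setOf_eq]
  · intro a (ha : evB q β a = 0)
    have h := defect_evB q β a
    rwa [ha, map_zero, sub_zero] at h


/-! ### Monomials in prime ideals -/

theorem mul_xpow (i : ℕ) (a : QPlane k q) : ∃ b, a * X ^ i = X ^ i * b := by
  induction i generalizing a with
  | zero => exact ⟨a, by simp⟩
  | succ i ih =>
    obtain ⟨b, hb⟩ := ih a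
    refine ⟨σ q b, ?_⟩
    rw [pow_succ, ← mul_assoc, hb, mul_assoc, mul_x, ← mul_assoc, ← pow_succ]

theorem mul_ypow (j : ℕ) (a : QPlane k q) : ∃ b, a * Y ^ j = Y ^ j * b := by
  induction j generalizing a with
  | zero => exact ⟨a, by simp⟩
  | succ j ih =>
    obtain ⟨b, hb⟩ := ih a
    refine ⟨τ q b, ?_⟩
    rw [pow_succ, ← mul_assoc, hb, mul_assoc, mul_y, ← mul_assoc, ← pow_succ]

theorem ypow_mul (j : ℕ) (a : QPlane k q) : ∃ b, Y ^ j * a = b * Y ^ j := by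
  induction j generalizing a with
  | zero => exact ⟨a, by simp⟩
  | succ j ih =>
    obtain ⟨b, hb⟩ := ih (τ' q a)
    refine ⟨b, ?_⟩
    rw [pow_succ, mul_assoc, y_mul, ← mul_assoc, hb, mul_assoc, ← pow_succ]

/-- The left ideal (in fact two-sided) generated by `x^i`. -/
def IxSet (i : ℕ) : Set (QPlane k q) := {z | ∃ r, z = X ^ i * r}

/-- The right ideal (in fact two-sided) generated by `y^j`. -/
def IySet (j : ℕ) : Set (QPlane k q) := {z | ∃ r, z = r * Y ^ j}

theorem IxSet_tsi (i : ℕ) : IsTwoSidedIdealSet (IxSet q i) := by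
  refine ⟨⟨0, by simp⟩, ?_, ?_, ?_, ?_⟩
  · rintro _ ⟨r, rfl⟩ _ ⟨s, rfl⟩; exact ⟨r + s, by rw [mul_add]⟩
  · rintro _ ⟨r, rfl⟩; exact ⟨-r, neg_mul_eq_mul_neg (X ^ i) r⟩
  · rintro _ ⟨r, rfl⟩ s
    obtain ⟨b, hb⟩ := mul_xpow q i s
    exact ⟨b * r, by rw [← mul_assoc, hb, mul_assoc]⟩
  · rintro _ ⟨r, rfl⟩ s; exact ⟨r * s, by rw [mul_assoc]⟩

theorem IySet_tsi (j : ℕ) : IsTwoSidedIdealSet (IySet q j) := by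
  refine ⟨⟨0, by simp⟩, ?_, ?_, ?_, ?_⟩
  · rintro _ ⟨r, rfl⟩ _ ⟨s, rfl⟩; exact ⟨r + s, by rw [add_mul]⟩
  · rintro _ ⟨r, rfl⟩; exact ⟨-r, neg_mul_eq_neg_mul r (Y ^ j)⟩
  · rintro _ ⟨r, rfl⟩ s; exact ⟨s * r, by rw [mul_assoc]⟩
  · rintro _ ⟨r, rfl⟩ s
    obtain ⟨b, hb⟩ := ypow_mul q j s
    exact ⟨r * b, by rw [mul_assoc, hb, mul_assoc]⟩

theorem mono_mem_cases {P : Set (QPlane k q)} (hP : IsPrimeIdealSet P) {i j : ℕ}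
    (h : X ^ i * Y ^ j ∈ P) : X ^ i ∈ P ∨ Y ^ j ∈ P := by
  have hms : MulSubset (IxSet q i) (IySet q j) P := by
    rintro _ ⟨r, rfl⟩ _ ⟨s, rfl⟩
    obtain ⟨b, hb⟩ := mul_ypow q j (r * s)
    have : X ^ i * r * (s * Y ^ j) = X ^ i * Y ^ j * b := by
      rw [mul_assoc, ← mul_assoc r, ← mul_assoc, mul_assoc (X ^ i), hb, ← mul_assoc]
    rw [this]
    exact hP.1.2.2.2.2 _ h b
  rcases hP.2.2 _ _ (IxSet_tsi q i) (IySet_tsi q j) hms with hs | hs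
  · exact Or.inl (hs ⟨1, (mul_one _).symm⟩)
  · exact Or.inr (hs ⟨1, (one_mul _).symm⟩)

theorem xpow_mem {P : Set (QPlane k q)} (hP : IsPrimeIdealSet P) :
    ∀ i, X ^ i ∈ P → X ∈ P ∨ (1 : QPlane k q) ∈ P := by
  intro i
  induction i with
  | zero => intro h; exact Or.inr (by simpa using h)
  | succ i ih =>
    intro h
    have hms : MulSubset (IxSet q 1) (IxSet q i) P := by
      rintro _ ⟨r, rfl⟩ _ ⟨s, rfl⟩
      obtain ⟨b, hb⟩ := mul_xpow q i r
      have : X ^ 1 * r * (X ^ i * s) = X ^ (i + 1) * (b * s) := by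
        rw [pow_one, pow_succ', mul_assoc, ← mul_assoc r, hb, mul_assoc, ← mul_assoc X, ← pow_succ']
      rw [this]
      exact hP.1.2.2.2.2 _ h _
    rcases hP.2.2 _ _ (IxSet_tsi q 1) (IxSet_tsi q i) hms with hs | hs
    · exact Or.inl (by simpa using hs ⟨1, (mul_one _).symm⟩)
    · exact ih (hs ⟨1, (mul_one _).symm⟩)

theorem ypow_mem {P : Set (QPlane k q)} (hP : IsPrimeIdealSet P) :
    ∀ j, Y ^ j ∈ P → Y ∈ P ∨ (1 : QPlane k q) ∈ P := by
  intro j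
  induction j with
  | zero => intro h; exact Or.inr (by simpa using h)
  | succ j ih =>
    intro h
    have hms : MulSubset (IySet q j) (IySet q 1) P := by
      rintro _ ⟨r, rfl⟩ _ ⟨s, rfl⟩
      obtain ⟨b, hb⟩ := ypow_mul q j s
      have : r * Y ^ j * (s * Y ^ 1) = r * b * Y ^ (j + 1) := by
        rw [pow_one, mul_assoc, ← mul_assoc (Y ^ j), hb, mul_assoc b, ← pow_succ, ← mul_assoc]
      rw [this]
      exact hP.1.2.2.2.1 _ h _
    rcases hP.2.2 _ _ (IySet_tsi q j) (IySet_tsi q 1) hms with hs | hs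
    · exact ih (hs ⟨1, (one_mul _).symm⟩)
    · exact Or.inl (by simpa using hs ⟨1, (one_mul _).symm⟩)

theorem gen_mem {P : Set (QPlane k q)} (hP : IsPrimeIdealSet P) {u : ℕ × ℕ}
    (h : mono q u ∈ P) : X ∈ P ∨ Y ∈ P := by
  have h1 : (1 : QPlane k q) ∉ P := by
    intro h1
    exact hP.2.1 (tsi_univ_of_one_mem hP.1 h1)
  rcases mono_mem_cases q hP h with hx | hy
  · rcases xpow_mem q hP _ hx with h' | h'
    · exact Or.inl h'
    · exact absurd h' h1
  · rcases ypow_mem q hP _ hy with h' | h'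
    · exact Or.inr h'
    · exact absurd h' h1

/-! ### Isolating a monomial in a prime ideal -/

theorem qpow_inj (hq : ∀ m : ℕ, 0 < m → q ^ m ≠ 1) {i i' : ℕ}
    (h : (((q⁻¹ : kˣ) : k)) ^ i = (((q⁻¹ : kˣ) : k)) ^ i') : i = i' := by
  have hu : (q⁻¹ : kˣ) ^ i = (q⁻¹ : kˣ) ^ i' := Units.ext (by rw [Units.val_pow_eq_pow_val, Units.val_pow_eq_pow_val]; exact h)
  by_contra hne
  rcases Nat.lt_or_ge i i' with hlt | hge
  · have : q ^ (i' - i) = 1 := by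
      have h2 : (q⁻¹ : kˣ) ^ (i' - i) = 1 := by
        have := mul_right_cancel (a := (q⁻¹ : kˣ) ^ (i' - i)) (b := (q⁻¹:kˣ) ^ i) (c := 1)
        apply this
        rw [← pow_add, one_mul, Nat.sub_add_cancel (le_of_lt hlt), hu]
      rw [inv_pow] at h2
      exact inv_eq_one.mp h2
    exact hq (i' - i) (by omega) this
  · have hlt : i' < i := by omega
    have : q ^ (i - i') = 1 := by
      have h2 : (q⁻¹ : kˣ) ^ (i - i') = 1 := by
        have := mul_right_cancel (a := (q⁻¹ : kˣ) ^ (i - i')) (b := (q⁻¹:kˣ) ^ i') (c := 1)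
        apply this
        rw [← pow_add, one_mul, Nat.sub_add_cancel (le_of_lt hlt), hu.symm]
      rw [inv_pow] at h2
      exact inv_eq_one.mp h2
    exact hq (i - i') (by omega) this

theorem sum_smul_mono_repr (S : Finset (ℕ × ℕ)) (g : ℕ × ℕ → k) (sh : ℕ × ℕ → ℕ × ℕ) :
    (B q).repr (∑ u ∈ S, g u • mono q (sh u)) = ∑ u ∈ S, g u • Finsupp.single (sh u) 1 := by
  rw [map_sum]
  exact Finset.sum_congr rfl fun u hu => by rw [map_smul, B_repr_mono]

theorem sum_single_apply_eq {S : Finset (ℕ × ℕ)} {g : ℕ × ℕ → k} {sh : ℕ × ℕ → ℕ × ℕ}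
    (hinj : ∀ u ∈ S, ∀ u' ∈ S, sh u = sh u' → u = u') {u₁ : ℕ × ℕ} (h1 : u₁ ∈ S) :
    (∑ u ∈ S, g u • Finsupp.single (sh u) 1) (sh u₁) = g u₁ := by
  rw [Finsupp.finset_sum_apply]
  rw [Finset.sum_eq_single_of_mem u₁ h1]
  · rw [Finsupp.smul_apply, Finsupp.single_apply, if_pos rfl, smul_eq_mul, mul_one]
  · intro u hu hne
    rw [Finsupp.smul_apply, Finsupp.single_apply, if_neg, smul_eq_mul, mul_zero]
    intro hc
    exact hne (hinj u hu u₁ h1 hc)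

theorem mem_support_sum_single {S : Finset (ℕ × ℕ)} {g : ℕ × ℕ → k} {sh : ℕ × ℕ → ℕ × ℕ}
    {s : ℕ × ℕ} (hs : s ∈ (∑ u ∈ S, g u • Finsupp.single (sh u) (1 : k)).support) :
    ∃ u ∈ S, g u ≠ 0 ∧ sh u = s := by
  have hne := Finsupp.mem_support_iff.mp hs
  rw [Finsupp.finset_sum_apply] at hne
  obtain ⟨u, hu, hval⟩ := Finset.exists_ne_zero_of_sum_ne_zero hne
  rw [Finsupp.smul_apply, Finsupp.single_apply] at hval
  refine ⟨u, hu, ?_, ?_⟩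
  · intro hc; rw [hc] at hval; simp at hval
  · by_contra hc; rw [if_neg hc] at hval; simp at hval

theorem mul_X_eq (b : QPlane k q) :
    b * X = ∑ u ∈ ((B q).repr b).support,
      ((((q⁻¹ : kˣ) : k)) ^ u.2 * ((B q).repr b) u) • mono q (u.1 + 1, u.2) := by
  conv_lhs => rw [repr_sum q b]
  rw [Finsupp.sum, Finset.sum_mul]
  refine Finset.sum_congr rfl fun u hu => ?_
  rw [smul_mul_assoc, mono_mul_x, smul_smul, mul_comm]

theorem X_mul_eq (b : QPlane k q) :
    X * b = ∑ u ∈ ((B q).repr b).support, ((B q).repr b) u • mono q (u.1 + 1, u.2) := by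
  conv_lhs => rw [repr_sum q b]
  rw [Finsupp.sum, Finset.mul_sum]
  refine Finset.sum_congr rfl fun u hu => ?_
  rw [mul_smul_comm, x_mul_mono]

theorem Y_mul_eq (a : QPlane k q) :
    Y * a = ∑ u ∈ ((B q).repr a).support,
      ((((q⁻¹ : kˣ) : k)) ^ u.1 * ((B q).repr a) u) • mono q (u.1, u.2 + 1) := by
  conv_lhs => rw [repr_sum q a]
  rw [Finsupp.sum, Finset.mul_sum]
  refine Finset.sum_congr rfl fun u hu => ?_
  rw [mul_smul_comm, y_mul_mono, smul_smul]
  congr 1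
  ring

theorem mul_Y_eq (a : QPlane k q) :
    a * Y = ∑ u ∈ ((B q).repr a).support, ((B q).repr a) u • mono q (u.1, u.2 + 1) := by
  conv_lhs => rw [repr_sum q a]
  rw [Finsupp.sum, Finset.sum_mul]
  refine Finset.sum_congr rfl fun u hu => ?_
  rw [smul_mul_assoc, mono_mul_y]

theorem conj_X_eq (b : QPlane k q) (j₀ : ℕ) :
    b * X - (((q⁻¹ : kˣ) : k)) ^ j₀ • (X * b) = ∑ u ∈ ((B q).repr b).support,
      (((B q).repr b) u * ((((q⁻¹ : kˣ) : k)) ^ u.2 - (((q⁻¹ : kˣ) : k)) ^ j₀)) •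
        mono q (u.1 + 1, u.2) := by
  rw [mul_X_eq, X_mul_eq, Finset.smul_sum, ← Finset.sum_sub_distrib]
  refine Finset.sum_congr rfl fun u hu => ?_
  module

theorem conj_Y_eq (a : QPlane k q) (i₀ : ℕ) :
    Y * a - (((q⁻¹ : kˣ) : k)) ^ i₀ • (a * Y) = ∑ u ∈ ((B q).repr a).support,
      (((B q).repr a) u * ((((q⁻¹ : kˣ) : k)) ^ u.1 - (((q⁻¹ : kˣ) : k)) ^ i₀)) •
        mono q (u.1, u.2 + 1) := by
  rw [Y_mul_eq, mul_Y_eq, Finset.smul_sum, ← Finset.sum_sub_distrib]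
  refine Finset.sum_congr rfl fun u hu => ?_
  module

theorem repr_ne_zero {a : QPlane k q} (ha : a ≠ 0) : (B q).repr a ≠ 0 :=
  fun h => ha (by simpa using ((B q).repr.map_eq_zero_iff).mp h)

/-- Pass 2: from an element of `P` supported in a single row, extract a monomial. -/
theorem passB (hq : ∀ m : ℕ, 0 < m → q ^ m ≠ 1) {P : Set (QPlane k q)}
    (hP : IsPrimeIdealSet P) :
    ∀ n : ℕ, ∀ b : QPlane k q, b ∈ P → b ≠ 0 →
      (∀ u ∈ ((B q).repr b).support, ∀ u' ∈ ((B q).repr b).support, u.1 = u'.1) →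
      ((B q).repr b).support.card ≤ n → ∃ u, mono q u ∈ P := by
  intro n
  induction n with
  | zero =>
    intro b hb hbne _ hcard
    exfalso
    have := Finsupp.support_nonempty_iff.mpr (repr_ne_zero q hbne)
    have := Finset.card_pos.mpr this
    omega
  | succ n ih =>
    intro b hb hbne hconst hcard
    by_cases hone : ((B q).repr b).support.card ≤ 1
    · -- single monomial
      have hne := Finsupp.support_nonempty_iff.mpr (repr_ne_zero q hbne)
      have hcard1 : ((B q).repr b).support.card = 1 := by
        have := Finset.card_pos.mpr hne
        omega
      obtain ⟨us, hus⟩ := Finset.card_eq_one.mp hcard1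
      refine ⟨us, ?_⟩
      set c := ((B q).repr b) us with hc
      have hbeq : b = c • mono q us := by
        conv_lhs => rw [repr_sum q b]
        rw [Finsupp.sum, hus, Finset.sum_singleton]
      have hcoef : c ≠ 0 := by
        apply Finsupp.mem_support_iff.mp
        rw [hus]; exact Finset.mem_singleton_self us
      have heq : mono q us = c⁻¹ • b := by
        rw [hbeq, smul_smul, inv_mul_cancel₀ hcoef, one_smul]
      rw [heq]
      exact tsi_mem_smul hP.1 hb _
    · -- at least two monomials: kill one
      push_neg at hone
      obtain ⟨u₀, hu₀, u₁, hu₁, hne01⟩ := Finset.one_lt_card.mp hone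
      set fb := (B q).repr b with hfb
      set g : ℕ × ℕ → k := fun u =>
        fb u * ((((q⁻¹ : kˣ) : k)) ^ u.2 - (((q⁻¹ : kˣ) : k)) ^ u₀.2) with hg
      set sh : ℕ × ℕ → ℕ × ℕ := fun u => (u.1 + 1, u.2) with hsh
      set b' := b * X - (((q⁻¹ : kˣ) : k)) ^ u₀.2 • (X * b) with hb'
      have hb'eq : b' = ∑ u ∈ fb.support, g u • mono q (sh u) := conj_X_eq q b u₀.2
      have hb'P : b' ∈ P := by
        rw [hb', sub_eq_add_neg]
        exact hP.1.2.1 _ (hP.1.2.2.2.2 b hb X) _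
          (hP.1.2.2.1 _ (tsi_mem_smul hP.1 (hP.1.2.2.2.1 b hb X) _))
      have hshinj : ∀ u ∈ fb.support, ∀ u' ∈ fb.support, sh u = sh u' → u = u' := by
        intro u _ u' _ h
        have h1 := congrArg Prod.fst h
        have h2 := congrArg Prod.snd h
        simp only [hsh] at h1 h2
        exact Prod.ext (by omega) h2
      have hrepr : (B q).repr b' = ∑ u ∈ fb.support, g u • Finsupp.single (sh u) 1 := by
        rw [hb'eq]; exact sum_smul_mono_repr q _ _ _
      have hg1 : g u₁ ≠ 0 := by
        refine mul_ne_zero (Finsupp.mem_support_iff.mp hu₁) ?_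
        intro hc
        have h2 : u₁.2 = u₀.2 := qpow_inj q hq (sub_eq_zero.mp hc)
        exact hne01 (Prod.ext (hconst u₁ hu₁ u₀ hu₀) h2).symm
      have hb'ne : b' ≠ 0 := by
        intro hc
        have := sum_single_apply_eq (g := g) hshinj hu₁
        rw [← hrepr, hc, map_zero] at this
        simp only [Finsupp.coe_zero, Pi.zero_apply] at this
        exact hg1 this.symm
      have hsupp : ((B q).repr b').support ⊆ (fb.support.erase u₀).image sh := by
        intro s hs
        rw [hrepr] at hs
        obtain ⟨u, hu, hgu, hshu⟩ := mem_support_sum_single hs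
        refine Finset.mem_image.mpr ⟨u, Finset.mem_erase.mpr ⟨?_, hu⟩, hshu⟩
        intro hc
        rw [hc] at hgu
        simp [hg] at hgu
      have hconst' : ∀ u ∈ ((B q).repr b').support, ∀ u' ∈ ((B q).repr b').support,
          u.1 = u'.1 := by
        intro w hw w' hw'
        obtain ⟨u, hu, hshu⟩ := Finset.mem_image.mp (hsupp hw)
        obtain ⟨u', hu', hshu'⟩ := Finset.mem_image.mp (hsupp hw')
        rw [← hshu, ← hshu']
        simp only [hsh]
        rw [hconst u (Finset.mem_of_mem_erase hu) u' (Finset.mem_of_mem_erase hu')]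
      have hcard' : ((B q).repr b').support.card ≤ n := by
        calc ((B q).repr b').support.card ≤ ((fb.support.erase u₀).image sh).card :=
              Finset.card_le_card hsupp
          _ ≤ (fb.support.erase u₀).card := Finset.card_image_le
          _ = fb.support.card - 1 := Finset.card_erase_of_mem hu₀
          _ ≤ n := by omega
      exact ih b' hb'P hb'ne hconst' hcard'

/-- Pass 1: from a nonzero element of `P`, extract a monomial. -/
theorem passA (hq : ∀ m : ℕ, 0 < m → q ^ m ≠ 1) {P : Set (QPlane k q)}
    (hP : IsPrimeIdealSet P) :
    ∀ n : ℕ, ∀ a : QPlane k q, a ∈ P → a ≠ 0 →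
      (((B q).repr a).support.image Prod.fst).card ≤ n → ∃ u, mono q u ∈ P := by
  intro n
  induction n with
  | zero =>
    intro a ha hane hcard
    exfalso
    have h1 := Finsupp.support_nonempty_iff.mpr (repr_ne_zero q hane)
    have := Finset.card_pos.mpr (h1.image Prod.fst)
    omega
  | succ n ih =>
    intro a ha hane hcard
    by_cases hone : (((B q).repr a).support.image Prod.fst).card ≤ 1
    · -- constant first coordinate: go to pass 2
      refine passB q hq hP ((B q).repr a).support.card a ha hane ?_ le_rfl
      intro u hu u' hu'
      exact Finset.card_le_one.mp hone _ (Finset.mem_image_of_mem _ hu) _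
        (Finset.mem_image_of_mem _ hu')
    · push_neg at hone
      obtain ⟨i₀, hi₀, i₁, hi₁, hne01⟩ := Finset.one_lt_card.mp hone
      obtain ⟨u₀, hu₀, hu₀i⟩ := Finset.mem_image.mp hi₀
      obtain ⟨u₁, hu₁, hu₁i⟩ := Finset.mem_image.mp hi₁
      set fa := (B q).repr a with hfa
      set g : ℕ × ℕ → k := fun u =>
        fa u * ((((q⁻¹ : kˣ) : k)) ^ u.1 - (((q⁻¹ : kˣ) : k)) ^ u₀.1) with hg
      set sh : ℕ × ℕ → ℕ × ℕ := fun u => (u.1, u.2 + 1) with hsh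
      set a' := Y * a - (((q⁻¹ : kˣ) : k)) ^ u₀.1 • (a * Y) with ha'
      have ha'eq : a' = ∑ u ∈ fa.support, g u • mono q (sh u) := conj_Y_eq q a u₀.1
      have ha'P : a' ∈ P := by
        rw [ha', sub_eq_add_neg]
        exact hP.1.2.1 _ (hP.1.2.2.2.1 a ha Y) _
          (hP.1.2.2.1 _ (tsi_mem_smul hP.1 (hP.1.2.2.2.2 a ha Y) _))
      have hshinj : ∀ u ∈ fa.support, ∀ u' ∈ fa.support, sh u = sh u' → u = u' := by
        intro u _ u' _ h
        have h1 := congrArg Prod.fst h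
        have h2 := congrArg Prod.snd h
        simp only [hsh] at h1 h2
        exact Prod.ext h1 (by omega)
      have hrepr : (B q).repr a' = ∑ u ∈ fa.support, g u • Finsupp.single (sh u) 1 := by
        rw [ha'eq]; exact sum_smul_mono_repr q _ _ _
      have hg1 : g u₁ ≠ 0 := by
        refine mul_ne_zero (Finsupp.mem_support_iff.mp hu₁) ?_
        intro hc
        have h2 : u₁.1 = u₀.1 := qpow_inj q hq (sub_eq_zero.mp hc)
        rw [hu₀i, hu₁i] at h2
        exact hne01 h2.symm
      have ha'ne : a' ≠ 0 := by
        intro hc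
        have := sum_single_apply_eq (g := g) hshinj hu₁
        rw [← hrepr, hc, map_zero] at this
        simp only [Finsupp.coe_zero, Pi.zero_apply] at this
        exact hg1 this.symm
      have hcard' : (((B q).repr a').support.image Prod.fst).card ≤ n := by
        have hsub : ((B q).repr a').support.image Prod.fst ⊆
            (fa.support.image Prod.fst).erase u₀.1 := by
          intro s hs
          obtain ⟨w, hw, hws⟩ := Finset.mem_image.mp hs
          rw [hrepr] at hw
          obtain ⟨u, hu, hgu, hshu⟩ := mem_support_sum_single hw
          refine Finset.mem_erase.mpr ⟨?_, ?_⟩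
          · intro hc
            have hufst : u.1 = u₀.1 := by
              rw [← hc, ← hws, ← hshu]
            simp only [hg] at hgu
            rw [hufst] at hgu
            simp at hgu
          · refine Finset.mem_image.mpr ⟨u, hu, ?_⟩
            rw [← hws, ← hshu]
        calc (((B q).repr a').support.image Prod.fst).card
            ≤ ((fa.support.image Prod.fst).erase u₀.1).card := Finset.card_le_card hsub
          _ = (fa.support.image Prod.fst).card - 1 :=
              Finset.card_erase_of_mem (hu₀i ▸ hi₀)
          _ ≤ n := by omega
      exact ih a' ha'P ha'ne hcard'

theorem exists_gen_mem {P : Set (QPlane k q)} (hq : ∀ m : ℕ, 0 < m → q ^ m ≠ 1)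
    (hP : IsPrimeIdealSet P) (hne : P ≠ {0}) : X ∈ P ∨ Y ∈ P := by
  have h0 : (0 : QPlane k q) ∈ P := hP.1.1
  have : ∃ a ∈ P, a ≠ 0 := by
    by_contra hc
    push_neg at hc
    apply hne
    apply Set.Subset.antisymm
    · intro a ha
      by_cases h : a = 0
      · exact h ▸ rfl
      · exact absurd h (by simpa using hc a ha)
    · intro a ha
      rw [Set.mem_singleton_iff.mp ha]
      exact h0
  obtain ⟨a, haP, hane⟩ := this
  obtain ⟨u, hu⟩ := passA q hq hP _ a haP hane le_rfl
  exact gen_mem q hP hu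


/-! ### Classification of the primes containing a generator -/

instance : NoZeroDivisors (QPlane k q) :=
  ⟨fun {a b} hab => by
    by_contra hc
    push_neg at hc
    exact qp_mul_ne_zero q hc.1 hc.2 hab⟩

theorem prime_zero : IsPrimeIdealSet ({0} : Set (QPlane k q)) := by
  have h := isPrime_ker_set (RingHom.id (QPlane k q))
  have hs : {a : QPlane k q | RingHom.id _ a = 0} = ({0} : Set (QPlane k q)) := by
    ext a; simp
  rwa [hs] at h

theorem classify_via [IsAlgClosed k] {P : Set (QPlane k q)} (hP : IsPrimeIdealSet P)
    (φ : QPlane k q →ₐ[k] Polynomial k) (ψ : Polynomial k →ₐ[k] QPlane k q)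
    (hφψ : ∀ p, φ (ψ p) = p) (hker : ∀ a : QPlane k q, φ a = 0 → a ∈ P) :
    P = {a : QPlane k q | φ a = 0} ∨
      ∃ α : k, P = ⇑φ ⁻¹' {p | p ∈ Ideal.span {Polynomial.X - Polynomial.C α}} := by
  -- the image ideal
  set Q : Ideal (Polynomial k) :=
    { carrier := ⇑φ '' P
      add_mem' := by
        intro p1 p2 hp1 hp2
        obtain ⟨a, ha, rfl⟩ := hp1
        obtain ⟨b, hb, rfl⟩ := hp2
        exact ⟨a + b, hP.1.2.1 a ha b hb, map_add φ a b⟩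
      zero_mem' := ⟨0, hP.1.1, map_zero φ⟩
      smul_mem' := by
        rintro r _ ⟨a, ha, rfl⟩
        refine ⟨ψ r * a, hP.1.2.2.2.1 a ha (ψ r), ?_⟩
        rw [map_mul, hφψ, smul_eq_mul] } with hQdef
  have hPQ : P = ⇑φ ⁻¹' {p | p ∈ Q} := by
    apply Set.Subset.antisymm
    · intro a ha
      exact ⟨a, ha, rfl⟩
    · rintro a ⟨a', ha', heq⟩
      have h0 : φ (a - a') = 0 := by rw [map_sub, heq, sub_self]
      have h1 : a - a' ∈ P := hker _ h0
      have h2 : a' + (a - a') ∈ P := hP.1.2.1 a' ha' _ h1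
      rwa [add_sub_cancel] at h2
  have hQne : Q ≠ ⊤ := by
    intro htop
    have h1 : (1 : Polynomial k) ∈ Q := htop ▸ Submodule.mem_top
    obtain ⟨a, haP, ha1⟩ := h1
    -- ψ (φ a) = ψ 1 = 1 ∈ P
    have hψ : ψ (φ a) ∈ P := by
      have hd : a - ψ (φ a) ∈ P := hker _ (by rw [map_sub, hφψ, sub_self])
      have h3 := hP.1.2.1 a haP _ (hP.1.2.2.1 _ hd)
      have h4 : a + -(a - ψ (φ a)) = ψ (φ a) := by abel
      rwa [h4] at h3
    rw [ha1, map_one] at hψ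
    exact hP.2.1 (tsi_univ_of_one_mem hP.1 hψ)
  have hQprime : Q.IsPrime := by
    refine ⟨hQne, ?_⟩
    intro p1 p2 hmem
    by_contra hc
    push_neg at hc
    set I : Set (QPlane k q) := ⇑φ ⁻¹' {p | p ∈ Ideal.span {p1}} with hI
    set J : Set (QPlane k q) := ⇑φ ⁻¹' {p | p ∈ Ideal.span {p2}} with hJ
    have hms : MulSubset I J P := by
      intro z hz w hw
      obtain ⟨c1, hc1⟩ := Ideal.mem_span_singleton'.mp hz
      obtain ⟨c2, hc2⟩ := Ideal.mem_span_singleton'.mp hw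
      rw [hPQ]
      show φ (z * w) ∈ Q
      rw [map_mul, ← hc1, ← hc2, show c1 * p1 * (c2 * p2) = c1 * c2 * (p1 * p2) by ring]
      exact Ideal.mul_mem_left _ _ hmem
    rcases hP.2.2 I J (tsi_preimage (φ : QPlane k q →+* Polynomial k) _)
        (tsi_preimage (φ : QPlane k q →+* Polynomial k) _) hms with hs | hs
    · refine hc.1 ?_
      have hmemI : ψ p1 ∈ I := by
        have h5 : φ (ψ p1) ∈ Ideal.span {p1} := by rw [hφψ]; exact Ideal.subset_span rfl
        exact h5
      exact ⟨ψ p1, hs hmemI, hφψ p1⟩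
    · refine hc.2 ?_
      have hmemJ : ψ p2 ∈ J := by
        have h5 : φ (ψ p2) ∈ Ideal.span {p2} := by rw [hφψ]; exact Ideal.subset_span rfl
        exact h5
      exact ⟨ψ p2, hs hmemJ, hφψ p2⟩
  by_cases hbot : Q = ⊥
  · left
    rw [hPQ, hbot]
    ext a
    simp [Ideal.mem_bot]
  · right
    obtain ⟨f, hf⟩ := (IsPrincipalIdealRing.principal Q).principal
    have hf' : Q = Ideal.span {f} := hf
    have hf0 : f ≠ 0 := by
      intro h
      rw [h] at hf'
      exact hbot (hf'.trans (Ideal.span_singleton_eq_bot.mpr rfl))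
    have hfsp : (Ideal.span {f} : Ideal (Polynomial k)).IsPrime := hf' ▸ hQprime
    have hfp : Prime f := (Ideal.span_singleton_prime hf0).mp hfsp
    have hdeg : f.degree = 1 := IsAlgClosed.degree_eq_one_of_irreducible k hfp.irreducible
    have hnd : f.natDegree = 1 := Polynomial.natDegree_eq_of_degree_eq_some hdeg
    have hc1 : f.coeff 1 ≠ 0 := by
      rw [← hnd]
      exact fun h => hf0 (Polynomial.leadingCoeff_eq_zero.mp h)
    have hrep := Polynomial.eq_X_add_C_of_degree_le_one (le_of_eq hdeg)
    set α : k := -(f.coeff 0 / f.coeff 1) with hα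
    have hCα : Polynomial.C α * Polynomial.C (f.coeff 1) = Polynomial.C (- f.coeff 0) := by
      rw [← map_mul]
      congr 1
      rw [hα]
      field_simp
    have h2 : (Polynomial.X - Polynomial.C α) * Polynomial.C (f.coeff 1)
        = Polynomial.C (f.coeff 1) * Polynomial.X + Polynomial.C (f.coeff 0) := by
      rw [sub_mul, hCα, map_neg, sub_neg_eq_add, mul_comm Polynomial.X]
    have hfact : f = (Polynomial.X - Polynomial.C α) * Polynomial.C (f.coeff 1) := by
      rw [h2]; exact hrep
    have hassoc : Associated (Polynomial.X - Polynomial.C α) f := by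
      obtain ⟨u, hu⟩ := Polynomial.isUnit_C.mpr (isUnit_iff_ne_zero.mpr hc1)
      exact ⟨u, by rw [hu]; exact hfact.symm⟩
    have hspan : Ideal.span {f} = Ideal.span {Polynomial.X - Polynomial.C α} :=
      Ideal.span_singleton_eq_span_singleton.mpr hassoc.symm
    refine ⟨α, ?_⟩
    rw [hPQ, hf', hspan]

/-- The preimage of `(T - α)` under the map killing `y` is `⟨x - α, y⟩`. -/
theorem preimage_killY (α : k) :
    ⇑(killY q) ⁻¹' {p | p ∈ Ideal.span {Polynomial.X - Polynomial.C α}} =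
      idealGen {qpX k q - algebraMap k (QPlane k q) α, qpY k q} := by
  apply Set.Subset.antisymm
  · intro a ha
    obtain ⟨g, hg⟩ := Ideal.mem_span_singleton'.mp ha
    have hI := idealGen_isTwoSided ({qpX k q - algebraMap k (QPlane k q) α, qpY k q} :
      Set (QPlane k q))
    have h1 : a - Polynomial.aeval (qpX k q) (killY q a) ∈
        idealGen {qpX k q - algebraMap k (QPlane k q) α, qpY k q} :=
      idealGen_mono (by intro z hz; exact Or.inr hz) (defect_killY q a)
    have h2 : Polynomial.aeval (qpX k q) (killY q a) ∈
        idealGen {qpX k q - algebraMap k (QPlane k q) α, qpY k q} := by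
      rw [← hg, map_mul]
      have haev : Polynomial.aeval (qpX k q) (Polynomial.X - Polynomial.C α) =
          qpX k q - algebraMap k (QPlane k q) α := by
        rw [map_sub, Polynomial.aeval_X, Polynomial.aeval_C]
      rw [haev]
      exact hI.2.2.2.1 _ (subset_idealGen (Or.inl rfl)) _
    have h3 := hI.2.1 _ h1 _ h2
    rwa [sub_add_cancel] at h3
  · refine idealGen_le (tsi_preimage (killY q : QPlane k q →+* Polynomial k) _) ?_
    rintro z (rfl | rfl)
    · refine Set.mem_preimage.mpr ?_
      rw [Set.mem_setOf_eq, map_sub, killY_x, AlgHom.commutes]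
      exact Ideal.subset_span rfl
    · refine Set.mem_preimage.mpr ?_
      rw [Set.mem_setOf_eq, killY_y]
      exact Submodule.zero_mem _

/-- The preimage of `(T - β)` under the map killing `x` is `⟨x, y - β⟩`. -/
theorem preimage_killX (β : k) :
    ⇑(killX q) ⁻¹' {p | p ∈ Ideal.span {Polynomial.X - Polynomial.C β}} =
      idealGen {qpX k q, qpY k q - algebraMap k (QPlane k q) β} := by
  apply Set.Subset.antisymm
  · intro a ha
    obtain ⟨g, hg⟩ := Ideal.mem_span_singleton'.mp ha
    have hI := idealGen_isTwoSided ({qpX k q, qpY k q - algebraMap k (QPlane k q) β} :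
      Set (QPlane k q))
    have h1 : a - Polynomial.aeval (qpY k q) (killX q a) ∈
        idealGen {qpX k q, qpY k q - algebraMap k (QPlane k q) β} :=
      idealGen_mono (by intro z hz; exact Or.inl hz) (defect_killX q a)
    have h2 : Polynomial.aeval (qpY k q) (killX q a) ∈
        idealGen {qpX k q, qpY k q - algebraMap k (QPlane k q) β} := by
      rw [← hg, map_mul]
      have haev : Polynomial.aeval (qpY k q) (Polynomial.X - Polynomial.C β) =
          qpY k q - algebraMap k (QPlane k q) β := by
        rw [map_sub, Polynomial.aeval_X, Polynomial.aeval_C]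
      rw [haev]
      exact hI.2.2.2.1 _ (subset_idealGen (Or.inr rfl)) _
    have h3 := hI.2.1 _ h1 _ h2
    rwa [sub_add_cancel] at h3
  · refine idealGen_le (tsi_preimage (killX q : QPlane k q →+* Polynomial k) _) ?_
    rintro z (rfl | rfl)
    · refine Set.mem_preimage.mpr ?_
      rw [Set.mem_setOf_eq, killX_x]
      exact Submodule.zero_mem _
    · refine Set.mem_preimage.mpr ?_
      rw [Set.mem_setOf_eq, map_sub, killX_y, AlgHom.commutes]
      exact Ideal.subset_span rfl

theorem classify_Y [IsAlgClosed k] {P : Set (QPlane k q)} (hP : IsPrimeIdealSet P)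
    (hY : Y ∈ P) :
    P = idealGen {qpY k q} ∨
      ∃ α : k, P = idealGen {qpX k q - algebraMap k (QPlane k q) α, qpY k q} := by
  have hker : ∀ a : QPlane k q, killY q a = 0 → a ∈ P := by
    intro a ha
    have h1 : idealGen {qpY k q} ⊆ P := idealGen_le hP.1 (by rintro z rfl; exact hY)
    apply h1
    rw [idealGen_Y_eq]
    exact ha
  rcases classify_via q hP (killY q) (Polynomial.aeval (qpX k q)) (killY_aeval q) hker
    with h | ⟨α, h⟩
  · left
    rw [h, idealGen_Y_eq]
  · right
    exact ⟨α, by rw [h, preimage_killY]⟩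

theorem classify_X [IsAlgClosed k] {P : Set (QPlane k q)} (hP : IsPrimeIdealSet P)
    (hX : X ∈ P) :
    P = idealGen {qpX k q} ∨
      ∃ β : k, P = idealGen {qpX k q, qpY k q - algebraMap k (QPlane k q) β} := by
  have hker : ∀ a : QPlane k q, killX q a = 0 → a ∈ P := by
    intro a ha
    have h1 : idealGen {qpX k q} ⊆ P := idealGen_le hP.1 (by rintro z rfl; exact hX)
    apply h1
    rw [idealGen_X_eq]
    exact ha
  rcases classify_via q hP (killX q) (Polynomial.aeval (qpY k q)) (killX_aeval q) hker
    with h | ⟨β, h⟩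
  · left
    rw [h, idealGen_X_eq]
  · right
    exact ⟨β, by rw [h, preimage_killX]⟩

end QPaux

/-- Let `k` be an algebraically closed field and `q ∈ kˣ` not a root of unity.  The
prime two-sided ideals of the quantum plane `O_q(k²)` are exactly: `⟨0⟩`, `⟨x⟩`, `⟨y⟩`,
`⟨x − α, y⟩` for `α ∈ k`, and `⟨x, y − β⟩` for `β ∈ k`. -/
theorem prime_spectrum_of_quantum_plane
    (k : Type u) [Field k] [IsAlgClosed k] (q : kˣ) (hq : ∀ m : ℕ, 0 < m → q ^ m ≠ 1)
    (P : Set (QPlane k q)) :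
    IsPrimeIdealSet P ↔
      (P = ({0} : Set (QPlane k q)) ∨
       P = idealGen {qpX k q} ∨
       P = idealGen {qpY k q} ∨
       (∃ α : k, P = idealGen {qpX k q - algebraMap k (QPlane k q) α, qpY k q}) ∨
       (∃ β : k, P = idealGen {qpX k q, qpY k q - algebraMap k (QPlane k q) β})) := by
  constructor
  · intro hP
    by_cases h0 : P = {0}
    · exact Or.inl h0
    · rcases QPaux.exists_gen_mem q hq hP h0 with hX | hY
      · rcases QPaux.classify_X q hP hX with h | h
        · exact Or.inr (Or.inl h)
        · exact Or.inr (Or.inr (Or.inr (Or.inr h)))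
      · rcases QPaux.classify_Y q hP hY with h | h
        · exact Or.inr (Or.inr (Or.inl h))
        · exact Or.inr (Or.inr (Or.inr (Or.inl h)))
  · rintro (rfl | rfl | rfl | ⟨α, rfl⟩ | ⟨β, rfl⟩)
    · exact QPaux.prime_zero q
    · rw [QPaux.idealGen_X_eq]
      exact isPrime_ker_set (QPaux.killX q : QPlane k q →+* Polynomial k)
    · rw [QPaux.idealGen_Y_eq]
      exact isPrime_ker_set (QPaux.killY q : QPlane k q →+* Polynomial k)
    · rw [QPaux.idealGen_ptA_eq]
      exact isPrime_ker_set (QPaux.evA q α : QPlane k q →+* k)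
    · rw [QPaux.idealGen_ptB_eq]
      exact isPrime_ker_set (QPaux.evB q β : QPlane k q →+* k)

end
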